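/- arXiv:1710.00812 — 3 statements merged into one kernel-verified Lean document; each statement's English description precedes it below -/
import Mathlib

section
/- If f_1 is majorized by g_1 and f_2 is majorized by g_2, and g_1 and g_2 are shape-equivalent, then f_1 + f_2 is majorized by g_1 + g_2. -/
open scoped BigOperators ENNReal Classical

namespace Paper

variable {p : ℕ}

/-- Convolution of two functions on `ZMod p`. -/
noncomputable def conv [NeZero p] (f g : ZMod p → ℝ) : ZMod p → ℝ :=
  fun k => ∑ i : ZMod p, f i * g (k - i)

/-- Iterated convolution of a list of functions (the delta mass at `0` is the
convolution identity used as the base of the fold). -/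
noncomputable def convList [NeZero p] (l : List (ZMod p → ℝ)) : ZMod p → ℝ :=
  l.foldr conv (fun k => if k = 0 then 1 else 0)

/-- The enumeration `0, +1, -1, +2, -2, ...` of `ZMod p`. -/
def plusSeq (p : ℕ) (n : ℕ) : ZMod p :=
  if n % 2 = 0 then -((n / 2 : ℕ) : ZMod p) else (((n + 1) / 2 : ℕ) : ZMod p)

/-- The enumeration `0, -1, +1, -2, +2, ...` of `ZMod p`. -/
def minusSeq (p : ℕ) (n : ℕ) : ZMod p := -(plusSeq p n)

/-- `fp` is the `+`-rearrangement of `f`: a permutation of the values of `f` that is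
nonincreasing along the ordering `0, +1, -1, +2, -2, ...`. -/
def IsPlusRearr (f fp : ZMod p → ℝ) : Prop :=
  (∃ σ : Equiv.Perm (ZMod p), fp = f ∘ σ) ∧
    ∀ n : ℕ, n + 1 < p → fp (plusSeq p (n + 1)) ≤ fp (plusSeq p n)

/-- `fm` is the `-`-rearrangement of `f`: a permutation of the values of `f` that is
nonincreasing along the ordering `0, -1, +1, -2, +2, ...`. -/
def IsMinusRearr (f fm : ZMod p → ℝ) : Prop :=
  (∃ σ : Equiv.Perm (ZMod p), fm = f ∘ σ) ∧
    ∀ n : ℕ, n + 1 < p → fm (minusSeq p (n + 1)) ≤ fm (minusSeq p n)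

/-- `f` is `△`-regular: its `+`-rearrangement is symmetric (so `f⁺ = f⁻`). -/
def TriangleRegular (f : ZMod p → ℝ) : Prop :=
  ∃ fp, IsPlusRearr f fp ∧ ∀ z, fp (-z) = fp z

/-- `f` is `□`-regular: `f⁺(z+1) = f⁻(z)` for all `z`. -/
def SquareRegular (f : ZMod p → ℝ) : Prop :=
  ∃ fp fm, IsPlusRearr f fp ∧ IsMinusRearr f fm ∧ ∀ z, fp (z + 1) = fm z

/-- probability mass function on `ZMod p`. -/
def IsPMF [NeZero p] (f : ZMod p → ℝ) : Prop :=
  (∀ i, 0 ≤ f i) ∧ ∑ i : ZMod p, f i = 1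

/-- Weak majorization: for every `r`, the sum of the `r` largest values of `f` is at most
the sum of the `r` largest values of `g` (expressed via subsets of each cardinality). -/
def WeakMaj [NeZero p] (f g : ZMod p → ℝ) : Prop :=
  ∀ s : Finset (ZMod p), ∃ t : Finset (ZMod p),
    t.card = s.card ∧ ∑ i ∈ s, f i ≤ ∑ i ∈ t, g i

/-- Majorization: weak majorization together with equality of total sums. -/
def Maj [NeZero p] (f g : ZMod p → ℝ) : Prop :=
  WeakMaj f g ∧ ∑ i : ZMod p, f i = ∑ i : ZMod p, g i

/-- `f` and `g` are shape-equivalent: there is a single ordering of the index set along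
which both are nonincreasing. -/
def ShapeEquiv [NeZero p] (f g : ZMod p → ℝ) : Prop :=
  ∃ e : Fin p ≃ ZMod p, (∀ m n : Fin p, m ≤ n → f (e n) ≤ f (e m)) ∧
    (∀ m n : Fin p, m ≤ n → g (e n) ≤ g (e m))

/-- Rényi entropy of order `α ∈ [0,∞]` of a pmf on `ZMod p`. -/
noncomputable def renyi [NeZero p] (α : ℝ≥0∞) (f : ZMod p → ℝ) : ℝ :=
  if α = 0 then Real.log ((Finset.univ.filter (fun i => f i ≠ 0)).card)
  else if α = 1 then ∑ i : ZMod p, Real.negMulLog (f i)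
  else if α = ⊤ then -Real.log (⨆ i : ZMod p, f i)
  else (1 - α.toReal)⁻¹ * Real.log (∑ i : ZMod p, f i ^ α.toReal)

/-!
For every `k`, the `k`-element sets of largest `g₁`-sum and of largest `g₂`-sum can be taken to be
the same set: the first `k` points of the common nonincreasing ordering. On that set the top-`k`
sums of `g₁` and `g₂` add up, and they dominate the sums of `f₁` and `f₂` over any `k`-element set.
-/

open Finset

section

variable {ι M : Type*} [AddCommMonoid M] [LinearOrder M] [IsOrderedAddMonoid M]

/-- Exchange the elements of `s \ T` for those of `T \ s`, with the minimum of `g` on `T` as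
threshold. -/
theorem sum_le_sum_of_card_eq_of_forall_le {s T : Finset ι} {g : ι → M} (hcard : #s = #T)
    (hT : ∀ x ∈ T, ∀ y ∉ T, g y ≤ g x) : ∑ x ∈ s, g x ≤ ∑ x ∈ T, g x := by
  rcases T.eq_empty_or_nonempty with rfl | hne
  · simp_all
  obtain ⟨m, hm, hmin⟩ := T.exists_min_image g hne
  calc ∑ x ∈ s, g x
      ≤ ∑ x ∈ s ∩ T, g x + #(s \ T) • g m := by
        rw [← sum_inter_add_sum_sdiff s T g]
        gcongr
        exact sum_le_card_nsmul _ _ _ fun y hy => hT m hm y (mem_sdiff.1 hy).2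
    _ = ∑ x ∈ T ∩ s, g x + #(T \ s) • g m := by rw [inter_comm, card_sdiff_comm hcard]
    _ ≤ ∑ x ∈ T, g x := by
        rw [← sum_inter_add_sum_sdiff T s g]
        gcongr
        exact card_nsmul_le_sum _ _ _ fun x hx => hmin x (mem_sdiff.1 hx).1

variable [Fintype ι] {n : ℕ}

def initSeg (e : Fin n ≃ ι) (k : ℕ) : Finset ι := {x | (e.symm x : ℕ) < k}

theorem card_initSeg (e : Fin n ≃ ι) {k : ℕ} (hk : k ≤ n) : #(initSeg e k) = k := by
  rw [initSeg, card_equiv e.symm (t := {i : Fin n | (i : ℕ) < k}) (by simp),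
    Fin.card_filter_val_lt, min_eq_right hk]

theorem sum_le_sum_initSeg (e : Fin n ≃ ι) {g : ι → M} (hg : Antitone (g ∘ e)) {t : Finset ι}
    (ht : #t ≤ n) : ∑ x ∈ t, g x ≤ ∑ x ∈ initSeg e #t, g x := by
  refine sum_le_sum_of_card_eq_of_forall_le (card_initSeg e ht).symm fun x hx y hy => ?_
  simp only [initSeg, mem_filter, mem_univ, true_and, not_lt] at hx hy
  simpa using hg (show e.symm x ≤ e.symm y from Fin.le_def.2 (by omega))

end

theorem maj_add_general [NeZero p] (f1 f2 g1 g2 : ZMod p → ℝ)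
    (h1 : Maj f1 g1) (h2 : Maj f2 g2) (hshape : ShapeEquiv g1 g2) :
    Maj (f1 + f2) (g1 + g2) := by
  obtain ⟨e, he1, he2⟩ := hshape
  refine ⟨fun s => ?_, by simp only [Pi.add_apply, sum_add_distrib, h1.2, h2.2]⟩
  have hs : #s ≤ p := by simpa using s.card_le_univ
  obtain ⟨t1, ht1, hf1⟩ := h1.1 s
  obtain ⟨t2, ht2, hf2⟩ := h2.1 s
  refine ⟨initSeg e #s, card_initSeg e hs, ?_⟩
  calc ∑ i ∈ s, (f1 + f2) i
      = ∑ i ∈ s, f1 i + ∑ i ∈ s, f2 i := sum_add_distrib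
    _ ≤ ∑ i ∈ t1, g1 i + ∑ i ∈ t2, g2 i := add_le_add hf1 hf2
    _ ≤ ∑ i ∈ initSeg e #s, g1 i + ∑ i ∈ initSeg e #s, g2 i := add_le_add
        (ht1 ▸ sum_le_sum_initSeg e (fun _ _ => he1 _ _) (ht1 ▸ hs))
        (ht2 ▸ sum_le_sum_initSeg e (fun _ _ => he2 _ _) (ht2 ▸ hs))
    _ = ∑ i ∈ initSeg e #s, (g1 + g2) i := sum_add_distrib.symm

/-- If `f₁ ≺ g₁`, `f₂ ≺ g₂` and `g₁, g₂` are shape-equivalent, then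
`f₁ + f₂ ≺ g₁ + g₂`. -/
theorem maj_add (hp : p.Prime) [NeZero p] (f1 f2 g1 g2 : ZMod p → ℝ)
    (hf1 : ∀ i, 0 ≤ f1 i) (hf2 : ∀ i, 0 ≤ f2 i)
    (hg1 : ∀ i, 0 ≤ g1 i) (hg2 : ∀ i, 0 ≤ g2 i)
    (h1 : Maj f1 g1) (h2 : Maj f2 g2) (hshape : ShapeEquiv g1 g2) :
    Maj (f1 + f2) (g1 + g2) :=
  maj_add_general f1 f2 g1 g2 h1 h2 hshape

end Paper
end

section
/- If X and Y are independent random variables uniformly distributed on finite subsets A and B of the integers, then N(X + Y) + 1 ≥ N(X) + N(Y), where N(X) = e^{2H(X)} and H is Shannon entropy. -/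
/-- Convolution of two functions on `ℤ`. -/
noncomputable def convZ (f g : ℤ → ℝ) : ℤ → ℝ := fun k => ∑' i : ℤ, f i * g (k - i)

/-- Shannon entropy of a probability mass function on `ℤ`. -/
noncomputable def entZ (f : ℤ → ℝ) : ℝ := ∑' i : ℤ, Real.negMulLog (f i)

/-- The uniform probability mass function on a finite subset of `ℤ`. -/
noncomputable def unif (A : Finset ℤ) : ℤ → ℝ :=
  fun i => if i ∈ A then ((A.card : ℝ))⁻¹ else 0



/-!
Let `a = #A ≤ b = #B` and let `r k` count the representations `k = x + y` with `x ∈ A`, `y ∈ B`,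
so that `H(X + Y) = log (ab) - (ab)⁻¹ ∑ₖ r k log (r k)`. Listing the representations of each `k`
in increasing order of `x` and discarding the last `s` of them injects the rest into
`{x ∈ A with s elements of A above it} × {y ∈ B with s elements of B below it}`, hence
`∑ₖ (r k - s)⁺ ≤ (a - s)(b - s)`, with equality for intervals. As `n ↦ n log n` is convex and
vanishes at `0` and `1`, it is a nonnegative combination of the functions `n ↦ (n - 1 - t)⁺`, so
`∑ₖ r k log (r k)` is at most its value for two intervals. This gives
`N(X + Y) ≥ b² exp (2D / (ab))` with `D = ∑_{j<a} 2j log (a / j) ≥ 5(a² - 1)/12` (termwise from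
`-log x ≥ (1 - x) + (1 - x)²/2`), and `exp w ≥ 1 + w + w²/2` finishes the estimate.
-/

open Finset Pointwise Real

theorem card_filter_le_eq_card_sub_of_injOn {α : Type*} {S : Finset α} {f : α → ℕ}
    (hinj : Set.InjOn f S) (hlt : ∀ x ∈ S, f x < #S) (s : ℕ) : #{x ∈ S | s ≤ f x} = #S - s := by
  have himage : S.image f = range #S := by
    refine eq_of_subset_of_card_le (fun n hn => ?_) (by rw [card_range, card_image_of_injOn hinj])
    obtain ⟨x, hx, rfl⟩ := mem_image.1 hn
    exact mem_range.2 (hlt x hx)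
  rw [← card_image_of_injOn (hinj.mono (filter_subset _ _)), ← filter_image, himage,
    range_eq_Ico, Ico_filter_le, Nat.card_Ico, max_eq_right (Nat.zero_le s)]

section OrderCount

variable {α : Type*} [LinearOrder α]

theorem card_filter_le_card_filter_gt (S : Finset α) (s : ℕ) :
    #{x ∈ S | s ≤ #{z ∈ S | x < z}} = #S - s := by
  refine card_filter_le_eq_card_sub_of_injOn
    (StrictAntiOn.injOn fun x _ y hy hxy => card_lt_card ?_)
    (fun x hx => card_lt_card (filter_ssubset.2 ⟨x, hx, lt_irrefl x⟩)) s
  exact (ssubset_iff_of_subset (monotone_filter_right S fun _ _ => hxy.trans)).2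
    ⟨y, mem_filter.2 ⟨hy, hxy⟩, by simp⟩

theorem card_filter_le_card_filter_lt (S : Finset α) (s : ℕ) :
    #{x ∈ S | s ≤ #{z ∈ S | z < x}} = #S - s :=
  card_filter_le_card_filter_gt (α := αᵒᵈ) S s

end OrderCount

section Representations

variable {G : Type*} [AddCommGroup G] [DecidableEq G] (A B : Finset G)

def repCount (k : G) : ℕ := #{x ∈ A | k - x ∈ B}

theorem repCount_le_card_left (k : G) : repCount A B k ≤ #A :=
  card_filter_le _ _

theorem repCount_pos_iff {k : G} : 0 < repCount A B k ↔ k ∈ A + B := by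
  simp only [repCount, card_pos, Finset.Nonempty, mem_filter, mem_add]
  exact ⟨fun ⟨x, hx, hkx⟩ => ⟨x, hx, k - x, hkx, add_sub_cancel x k⟩,
    fun ⟨x, hx, y, hy, hxy⟩ => ⟨x, hx, by rwa [← hxy, add_sub_cancel_left]⟩⟩

theorem card_filter_add_eq_repCount (k : G) : #{p ∈ A ×ˢ B | p.1 + p.2 = k} = repCount A B k := by
  refine card_nbij' Prod.fst (fun x => (x, k - x)) ?_ ?_ ?_ ?_
  · rintro ⟨x, y⟩ h
    simp only [coe_filter, mem_product, Set.mem_ofPred_eq] at h ⊢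
    obtain ⟨⟨hx, hy⟩, rfl⟩ := h
    simpa [repCount] using ⟨hx, hy⟩
  · intro x h
    simp only [coe_filter, Set.mem_ofPred_eq, mem_product] at h ⊢
    exact ⟨h, add_sub_cancel x k⟩
  · rintro ⟨x, y⟩ h
    simp only [coe_filter, mem_product, Set.mem_ofPred_eq] at h
    simp [← h.2]
  · intro x _
    rfl

theorem sum_repCount : ∑ k ∈ A + B, repCount A B k = #A * #B := by
  rw [← card_product, card_eq_sum_card_fiberwise fun p hp => add_mem_add (mem_product.1 hp).1
    (mem_product.1 hp).2]
  exact sum_congr rfl fun k _ => (card_filter_add_eq_repCount A B k).symm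

end Representations

section SecondDifferences

variable {f : ℕ → ℝ}

theorem sum_range_secondDiff (f : ℕ → ℝ) (n : ℕ) :
    ∑ t ∈ range n, (f (t + 2) - 2 * f (t + 1) + f t) = f (n + 1) - f n - (f 1 - f 0) := by
  induction n with
  | zero => simp
  | succ n ih => rw [sum_range_succ, ih]; ring

theorem eq_sum_secondDiff_mul_tsub (hf0 : f 0 = 0) (hf1 : f 1 = 0) {m r : ℕ} (hr : r ≤ m + 1) :
    f r = ∑ t ∈ range m, (f (t + 2) - 2 * f (t + 1) + f t) * ((r - 1 - t : ℕ) : ℝ) := by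
  induction r with
  | zero => simp [hf0]
  | succ r ih =>
    have hsplit (t : ℕ) : r + 1 - 1 - t = (r - 1 - t) + if t < r then 1 else 0 := by
      split_ifs <;> omega
    have hrange : {t ∈ range m | t < r} = range r := by
      ext t; simp only [mem_filter, mem_range]; omega
    simp_rw [hsplit, Nat.cast_add, Nat.cast_ite, Nat.cast_one, Nat.cast_zero, mul_add, mul_ite,
      mul_one, mul_zero, sum_add_distrib, ← ih (by omega), ← sum_filter, hrange,
      sum_range_secondDiff, hf0, hf1]
    ring

theorem tsub_mul_tsub_eq (a b t : ℕ) (hab : a ≤ b) :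
    (a - 1 - t) * (b - 1 - t) = 2 * ∑ j ∈ range a, (j - 1 - t) + (b - a + 1) * (a - 1 - t) := by
  rcases le_or_gt a (t + 1) with h | h
  · rw [sum_eq_zero fun j hj => by simp only [mem_range] at hj; omega]
    simp [show a - 1 - t = 0 by omega]
  · obtain ⟨n, rfl⟩ := Nat.exists_eq_add_of_lt h
    obtain ⟨c, rfl⟩ := Nat.exists_eq_add_of_le hab
    have hgauss := sum_range_id_mul_two (n + 1)
    rw [show t + 1 + n + 1 = (t + 1) + (n + 1) by ring, sum_range_add,
      sum_eq_zero fun j hj => by simp only [mem_range] at hj; omega]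
    simp only [show ∀ x, t + 1 + x - 1 - t = x by omega,
      show t + 1 + (n + 1) + c - 1 - t = n + 1 + c by omega,
      show t + 1 + (n + 1) + c - (t + 1 + (n + 1)) = c by omega, zero_add,
      Nat.add_sub_cancel] at hgauss ⊢
    rw [mul_comm 2, hgauss]
    ring

theorem sum_secondDiff_mul_tsub_mul_tsub (hf0 : f 0 = 0) (hf1 : f 1 = 0) {a b : ℕ} (hab : a ≤ b) :
    ∑ t ∈ range (a - 1), (f (t + 2) - 2 * f (t + 1) + f t) * (((a - 1 - t) * (b - 1 - t) : ℕ) : ℝ) =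
      2 * ∑ j ∈ range a, f j + ((b - a + 1 : ℕ) : ℝ) * f a := by
  have hdecomp {r : ℕ} (hr : r ≤ a) :=
    eq_sum_secondDiff_mul_tsub hf0 hf1 (m := a - 1) (r := r) (by omega)
  rw [sum_congr rfl fun j hj => hdecomp (mem_range.1 hj).le, hdecomp le_rfl]
  simp only [tsub_mul_tsub_eq a b _ hab, Nat.cast_add, Nat.cast_mul, Nat.cast_sum, Nat.cast_ofNat,
    mul_add, sum_add_distrib, mul_sum]
  rw [sum_comm]
  congr 1
  · exact sum_congr rfl fun _ _ => sum_congr rfl fun _ _ => by ring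
  · exact sum_congr rfl fun _ _ => by ring

end SecondDifferences

section OrderedGroup

variable {G : Type*} [AddCommGroup G] [LinearOrder G] [IsOrderedAddMonoid G]

theorem sum_repCount_tsub_le (A B : Finset G) (s : ℕ) :
    ∑ k ∈ A + B, (repCount A B k - s) ≤ (#A - s) * (#B - s) := by
  set T : G → Finset G := fun k => {x ∈ A | k - x ∈ B}
  calc ∑ k ∈ A + B, (repCount A B k - s)
        = #((A + B).sigma fun k => {x ∈ T k | s ≤ #{z ∈ T k | x < z}}) := by
        rw [card_sigma]
        exact sum_congr rfl fun k _ => (card_filter_le_card_filter_gt (T k) s).symm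
    _ ≤ #({x ∈ A | s ≤ #{z ∈ A | x < z}} ×ˢ {y ∈ B | s ≤ #{w ∈ B | w < y}}) := by
        refine card_le_card_of_injOn (fun p => (p.2, p.1 - p.2)) ?_ ?_
        · rintro ⟨k, x⟩ hkx
          simp only [T, coe_sigma, Set.mem_sigma_iff, mem_coe, mem_filter] at hkx
          obtain ⟨-, ⟨hx, hkx⟩, hs⟩ := hkx
          simp only [coe_product, coe_filter, Set.mem_prod, Set.mem_ofPred_eq]
          refine ⟨⟨hx, hs.trans (card_le_card (filter_subset_filter _ (filter_subset _ _)))⟩,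
            hkx, hs.trans (card_le_card_of_injOn (k - ·) (fun z hz => ?_)
              (sub_right_injective.injOn))⟩
          simp only [coe_filter, mem_filter, Set.mem_ofPred_eq] at hz ⊢
          exact ⟨hz.1.2, sub_lt_sub_left hz.2 k⟩
        · rintro ⟨k, x⟩ - ⟨k', x'⟩ - h
          simp only [Prod.mk.injEq] at h
          obtain ⟨rfl, h⟩ := h
          simp [sub_left_inj.1 h]
    _ = (#A - s) * (#B - s) := by
        rw [card_product, card_filter_le_card_filter_gt, card_filter_le_card_filter_lt]

theorem sum_comp_repCount_le {f : ℕ → ℝ} (hf0 : f 0 = 0) (hf1 : f 1 = 0)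
    (hf : ∀ t, 0 ≤ f (t + 2) - 2 * f (t + 1) + f t) {A B : Finset G} (hAB : #A ≤ #B) :
    ∑ k ∈ A + B, f (repCount A B k) ≤ 2 * ∑ j ∈ range #A, f j + ((#B - #A + 1 : ℕ) : ℝ) * f #A := by
  rw [← sum_secondDiff_mul_tsub_mul_tsub hf0 hf1 hAB]
  calc ∑ k ∈ A + B, f (repCount A B k)
        = ∑ t ∈ range (#A - 1), (f (t + 2) - 2 * f (t + 1) + f t) *
            ((∑ k ∈ A + B, (repCount A B k - (t + 1)) : ℕ) : ℝ) := by
        rw [sum_congr rfl fun k _ => eq_sum_secondDiff_mul_tsub hf0 hf1 (m := #A - 1)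
          (by have := repCount_le_card_left A B k; omega), sum_comm]
        simp only [Nat.cast_sum, mul_sum, Nat.sub_sub, add_comm 1]
    _ ≤ _ := by
        gcongr with t
        · exact hf t
        · simpa only [Nat.sub_sub, add_comm 1] using sum_repCount_tsub_le A B (t + 1)

end OrderedGroup

theorem secondDiff_natCast_mul_log_nonneg (t : ℕ) :
    0 ≤ ((t + 2 : ℕ) : ℝ) * log (t + 2 : ℕ) - 2 * (((t + 1 : ℕ) : ℝ) * log (t + 1 : ℕ)) +
      (t : ℝ) * log t := by
  have hmid := Real.convexOn_mul_log.2 (Set.mem_Ici.2 (Nat.cast_nonneg t))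
    (Set.mem_Ici.2 (Nat.cast_nonneg (t + 2))) (by norm_num : (0 : ℝ) ≤ 1 / 2)
    (by norm_num : (0 : ℝ) ≤ 1 / 2) (by norm_num)
  have h : (1 / 2 : ℝ) • (t : ℝ) + (1 / 2 : ℝ) • ((t + 2 : ℕ) : ℝ) = ((t + 1 : ℕ) : ℝ) := by
    push_cast; simp only [smul_eq_mul]; ring
  rw [h, smul_eq_mul, smul_eq_mul] at hmid
  linarith

section Uniform

theorem convZ_comm (f g : ℤ → ℝ) : convZ f g = convZ g f := by
  funext k
  rw [convZ, convZ, ← (Equiv.subLeft k).tsum_eq]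
  simp only [Equiv.subLeft_apply, sub_sub_cancel, mul_comm]

variable {A B : Finset ℤ}

theorem entZ_unif (hA : A.Nonempty) : entZ (unif A) = log #A := by
  have hcard : (#A : ℝ) ≠ 0 := by exact_mod_cast hA.card_pos.ne'
  rw [entZ, tsum_eq_sum (s := A) fun i hi => by simp [unif, hi],
    sum_congr rfl fun i hi => by rw [unif, if_pos hi], sum_const, nsmul_eq_mul, negMulLog, log_inv]
  field_simp

theorem exp_two_mul_entZ_unif (hA : A.Nonempty) : exp (2 * entZ (unif A)) = (#A : ℝ) ^ 2 := by
  rw [entZ_unif hA, mul_comm, exp_mul, exp_log (by exact_mod_cast hA.card_pos)]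
  norm_cast

theorem convZ_unif_apply (A B : Finset ℤ) (k : ℤ) :
    convZ (unif A) (unif B) k = repCount A B k / (#A * #B) := by
  rw [convZ, tsum_eq_sum (s := A) fun i hi => by simp [unif, hi], repCount, div_eq_mul_inv,
    mul_inv, ← Finset.sum_boole, sum_mul]
  refine sum_congr rfl fun i hi => ?_
  by_cases hki : k - i ∈ B <;> simp [unif, hi, hki]

theorem entZ_convZ_unif (hA : A.Nonempty) (hB : B.Nonempty) :
    entZ (convZ (unif A) (unif B)) = log (#A * #B) -
      (∑ k ∈ A + B, (repCount A B k : ℝ) * log (repCount A B k)) / (#A * #B) := by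
  have hab : (0 : ℝ) < #A * #B := by have := hA.card_pos; have := hB.card_pos; positivity
  have hsum : ∑ k ∈ A + B, (repCount A B k : ℝ) = #A * #B := by exact_mod_cast sum_repCount A B
  rw [entZ, tsum_eq_sum (s := A + B) fun k hk => by
    rw [convZ_unif_apply, Nat.eq_zero_of_not_pos (mt (repCount_pos_iff A B).1 hk)]; simp]
  have hterm : ∀ k ∈ A + B, negMulLog (convZ (unif A) (unif B) k) =
      repCount A B k / (#A * #B) * log (#A * #B) -
        repCount A B k * log (repCount A B k) / (#A * #B) := by
    intro k hk
    have hr : (0 : ℝ) < repCount A B k := by exact_mod_cast (repCount_pos_iff A B).2 hk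
    rw [convZ_unif_apply, negMulLog, log_div hr.ne' hab.ne']
    ring
  rw [sum_congr rfl hterm, sum_sub_distrib, ← sum_mul, ← sum_div, ← sum_div, hsum,
    div_self hab.ne', one_mul]

end Uniform

theorem sub_add_sq_div_two_le_neg_log {x : ℝ} (hx0 : 0 < x) (hx1 : x ≤ 1) :
    (1 - x) + (1 - x) ^ 2 / 2 ≤ -log x := by
  have hsum := hasSum_pow_div_log_of_abs_lt_one (x := 1 - x)
    (by rw [abs_lt]; constructor <;> linarith)
  rw [sub_sub_cancel] at hsum
  have := sum_le_hasSum (range 2)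
    (fun n _ => div_nonneg (pow_nonneg (by linarith) _) (by positivity)) hsum
  norm_num [sum_range_succ] at this
  linarith

theorem twelve_mul_sum_range_mul_sub_mul_sub (a : ℝ) (n : ℕ) :
    12 * ∑ j ∈ range n, (j : ℝ) * (a - j) * (3 * a - j) =
      18 * a ^ 2 * n * (n - 1) - 8 * a * n * (n - 1) * (2 * n - 1) + 3 * n ^ 2 * (n - 1) ^ 2 := by
  induction n with
  | zero => simp
  | succ n ih => rw [sum_range_succ, mul_add, ih]; push_cast; ring

theorem five_mul_sq_sub_one_div_twelve_le_sum (a : ℕ) :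
    5 * ((a : ℝ) ^ 2 - 1) / 12 ≤ ∑ j ∈ range a, 2 * (j : ℝ) * (log a - log j) := by
  rcases Nat.eq_zero_or_pos a with rfl | ha
  · norm_num
  have ha' : (0 : ℝ) < a := by exact_mod_cast ha
  calc 5 * ((a : ℝ) ^ 2 - 1) / 12
        = ∑ j ∈ range a, 2 * (j : ℝ) * ((1 - j / a) + (1 - j / a) ^ 2 / 2) := by
        have hid := twelve_mul_sum_range_mul_sub_mul_sub a a
        rw [sum_congr rfl fun (j : ℕ) _ => show 2 * (j : ℝ) * ((1 - j / a) + (1 - j / a) ^ 2 / 2) =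
          j * (a - j) * (3 * a - j) / a ^ 2 by field_simp; ring, ← sum_div]
        rw [eq_div_iff (pow_ne_zero 2 ha'.ne')]
        linear_combination (-1 / 12 : ℝ) * hid
    _ ≤ ∑ j ∈ range a, 2 * (j : ℝ) * (log a - log j) := by
        refine sum_le_sum fun j hj => ?_
        rcases Nat.eq_zero_or_pos j with rfl | hj0
        · simp
        have hj' : (0 : ℝ) < j := by exact_mod_cast hj0
        have hja : (j : ℝ) ≤ a := by exact_mod_cast (mem_range.1 hj).le
        refine mul_le_mul_of_nonneg_left ?_ (by positivity)
        have := sub_add_sq_div_two_le_neg_log (div_pos hj' ha') ((div_le_one ha').2 hja)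
        rwa [log_div hj'.ne' ha'.ne', neg_sub] at this

theorem sq_add_sq_le_sq_mul_exp {a b : ℕ} (ha : 1 ≤ a) (hab : a ≤ b) {D : ℝ}
    (hD : 5 * ((a : ℝ) ^ 2 - 1) / 12 ≤ D) :
    (a : ℝ) ^ 2 + b ^ 2 ≤ b ^ 2 * exp (2 * D / (a * b)) + 1 := by
  have ha' : (1 : ℝ) ≤ a := by exact_mod_cast ha
  have hab' : (a : ℝ) ≤ b := by exact_mod_cast hab
  set P := 5 * ((a : ℝ) ^ 2 - 1) / 12
  have hb' : (0 : ℝ) < b := by linarith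
  have hP : 0 ≤ P := div_nonneg (by nlinarith) (by norm_num)
  have hD0 : 0 ≤ D := hP.trans hD
  -- `2P + 2P²/a² - (a² - 1) = (a² - 1)(13a² - 25)/(72a²)` is negative for real `1 < a < 1.38`
  have hP2 : (a : ℝ) ^ 2 - 1 ≤ 2 * P + 2 * P ^ 2 / a ^ 2 := by
    rw [← sub_nonneg, show 2 * P + 2 * P ^ 2 / a ^ 2 - ((a : ℝ) ^ 2 - 1) =
      ((a : ℝ) ^ 2 - 1) * (13 * a ^ 2 - 25) / (72 * a ^ 2) by field_simp; ring]
    rcases ha.eq_or_lt with rfl | ha2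
    · simp
    have : (2 : ℝ) ≤ a := by exact_mod_cast ha2
    have : 0 ≤ (a : ℝ) ^ 2 - 1 := by nlinarith
    have : 0 ≤ 13 * (a : ℝ) ^ 2 - 25 := by nlinarith
    positivity
  have hlin : 2 * D ≤ b ^ 2 * (2 * D / (a * b)) := by
    rw [show (b : ℝ) ^ 2 * (2 * D / (a * b)) = 2 * D * (b / a) by field_simp]
    exact le_mul_of_one_le_right (by positivity) ((one_le_div (by positivity)).2 hab')
  have hquad : 2 * P ^ 2 / a ^ 2 ≤ b ^ 2 * ((2 * D / (a * b)) ^ 2 / 2) := by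
    rw [show (b : ℝ) ^ 2 * ((2 * D / (a * b)) ^ 2 / 2) = 2 * D ^ 2 / a ^ 2 by field_simp]
    gcongr
  have hexp := quadratic_le_exp_of_nonneg (x := 2 * D / (a * b)) (by positivity)
  nlinarith [mul_le_mul_of_nonneg_left hexp (sq_nonneg (b : ℝ))]

theorem log_card_add_div_le_entZ_convZ_unif {A B : Finset ℤ} (hA : A.Nonempty) (hB : B.Nonempty)
    (hAB : #A ≤ #B) :
    log #B + (∑ j ∈ range #A, 2 * (j : ℝ) * (log #A - log j)) / (#A * #B) ≤
      entZ (convZ (unif A) (unif B)) := by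
  have ha : (0 : ℝ) < #A := by exact_mod_cast hA.card_pos
  have hb : (0 : ℝ) < #B := by exact_mod_cast hB.card_pos
  set D := ∑ j ∈ range #A, 2 * (j : ℝ) * (log #A - log j)
  have hgauss : ∑ j ∈ range #A, 2 * (j : ℝ) = #A * (#A - 1) := by
    rw [← mul_sum, ← Nat.cast_sum, mul_comm, ← Nat.cast_ofNat, ← Nat.cast_mul,
      sum_range_id_mul_two, Nat.cast_mul, Nat.cast_pred hA.card_pos]
  have hD : D = (∑ j ∈ range #A, 2 * (j : ℝ)) * log #A - 2 * ∑ j ∈ range #A, (j : ℝ) * log j := by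
    simp only [D, mul_sub, sum_sub_distrib, sum_mul, mul_sum, mul_assoc]
  have hmaj := sum_comp_repCount_le (f := fun n : ℕ => (n : ℝ) * log n) (by simp) (by simp)
    secondDiff_natCast_mul_log_nonneg hAB
  rw [show 2 * ∑ j ∈ range #A, (j : ℝ) * log j + ((#B - #A + 1 : ℕ) : ℝ) * (#A * log #A) =
    #A * #B * log #A - D by rw [hD, hgauss]; push_cast [hAB]; ring] at hmaj
  have := div_le_div_of_nonneg_right hmaj (by positivity : (0 : ℝ) ≤ #A * #B)
  rw [sub_div, mul_div_cancel_left₀ _ (by positivity)] at this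
  rw [entZ_convZ_unif hA hB, log_mul ha.ne' hb.ne']
  linarith

theorem discrete_EPI_uniform_of_card_le {A B : Finset ℤ} (hA : A.Nonempty) (hB : B.Nonempty)
    (hAB : #A ≤ #B) :
    (#A : ℝ) ^ 2 + (#B : ℝ) ^ 2 ≤ exp (2 * entZ (convZ (unif A) (unif B))) + 1 := by
  set D := ∑ j ∈ range #A, 2 * (j : ℝ) * (log #A - log j)
  calc (#A : ℝ) ^ 2 + (#B : ℝ) ^ 2 ≤ (#B : ℝ) ^ 2 * exp (2 * D / (#A * #B)) + 1 :=
        sq_add_sq_le_sq_mul_exp hA.card_pos hAB (five_mul_sq_sub_one_div_twelve_le_sum #A)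
    _ = exp (2 * (log #B + D / (#A * #B))) + 1 := by
        rw [mul_add, exp_add, mul_comm 2 (log _), exp_mul, exp_log (by exact_mod_cast hB.card_pos),
          mul_div_assoc]
        norm_cast
    _ ≤ exp (2 * entZ (convZ (unif A) (unif B))) + 1 := by
        gcongr
        exact log_card_add_div_le_entZ_convZ_unif hA hB hAB

/-- Discrete entropy power inequality for uniforms: if `X`, `Y` are independent and
uniform on finite sets `A, B ⊆ ℤ`, then `N(X+Y) + 1 ≥ N(X) + N(Y)` with `N = e^{2H}`. -/
theorem discrete_EPI_uniform (A B : Finset ℤ) (hA : A.Nonempty) (hB : B.Nonempty) :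
    Real.exp (2 * entZ (unif A)) + Real.exp (2 * entZ (unif B)) ≤
      Real.exp (2 * entZ (convZ (unif A) (unif B))) + 1 := by
  rw [exp_two_mul_entZ_unif hA, exp_two_mul_entZ_unif hB]
  rcases le_total #A #B with hAB | hBA
  · exact discrete_EPI_uniform_of_card_le hA hB hAB
  · rw [add_comm, convZ_comm]
    exact discrete_EPI_uniform_of_card_le hB hA hBA
end

section
/- The Shannon entropy of the triangular distribution obtained by convolving the uniform distribution on {0, 1, ..., n-1} with itself equals H = -2∑_{i=1}^{n-1} (i/n²) log(i/n²) - (1/n) log(1/n), and this quantity is at least log n + 1/2 - (log n)/n - 1/(2n²). -/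
/-- antiderivative of x log x -/
lemma hasDeriv_F (x : ℝ) (hx : 0 < x) :
    HasDerivAt (fun x : ℝ => x ^ 2 / 2 * Real.log x - x ^ 2 / 4) (x * Real.log x) x := by
  have h1 : HasDerivAt (fun x : ℝ => x ^ 2 / 2 * Real.log x)
      (x * Real.log x + x ^ 2 / 2 * x⁻¹) x := by
    have := ((hasDerivAt_pow 2 x).div_const 2).mul (Real.hasDerivAt_log hx.ne')
    refine this.congr_deriv ?_
    norm_num
  have h2 : HasDerivAt (fun x : ℝ => x ^ 2 / 4) (x / 2) x := by
    have := (hasDerivAt_pow 2 x).div_const 4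
    refine this.congr_deriv ?_
    norm_num
    ring_nf
  have := h1.sub h2
  refine this.congr_deriv ?_
  field_simp
  ring

lemma integral_xlogx (n : ℕ) (hn : 1 ≤ n) :
    ∫ x in (1:ℝ)..(n:ℝ), x * Real.log x
      = (n:ℝ) ^ 2 / 2 * Real.log n - (n:ℝ) ^ 2 / 4 + 1 / 4 := by
  have hn1 : (1:ℝ) ≤ (n:ℝ) := by exact_mod_cast hn
  rw [intervalIntegral.integral_eq_sub_of_hasDerivAt (f := fun x : ℝ => x ^ 2 / 2 * Real.log x - x ^ 2 / 4)
    (fun x hx => hasDeriv_F x (by rw [Set.uIcc_of_le hn1] at hx; linarith [hx.1]))]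
  · simp [Real.log_one]
  · apply ContinuousOn.intervalIntegrable
    apply ContinuousOn.mul continuousOn_id
    apply Real.continuousOn_log.mono
    intro x hx
    rw [Set.uIcc_of_le hn1] at hx
    simp; intro h; rw [h] at hx; linarith [hx.1]

lemma sum_ilogi_le (n : ℕ) (hn : 1 ≤ n) :
    ∑ i ∈ Finset.Icc 1 (n - 1), (i : ℝ) * Real.log i
      ≤ (n:ℝ) ^ 2 / 2 * Real.log n - (n:ℝ) ^ 2 / 4 + 1 / 4 := by
  have h1 : Finset.Icc 1 (n - 1) = Finset.Ico 1 n := by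
    ext x; simp [Finset.mem_Icc, Finset.mem_Ico]; omega
  rw [h1, ← integral_xlogx n hn]
  have : ((1:ℕ):ℝ) = (1:ℝ) := by norm_num
  rw [← this]
  refine MonotoneOn.sum_le_integral_Ico (f := fun x => x * Real.log x) hn ?_
  intro a ha b hb hab
  have ha1 : (1:ℝ) ≤ a := by exact_mod_cast ha.1
  have hb1 : (1:ℝ) ≤ b := by exact_mod_cast hb.1
  have : Real.log a ≤ Real.log b := Real.log_le_log (by linarith) hab
  have la : 0 ≤ Real.log a := Real.log_nonneg ha1
  have lb : 0 ≤ Real.log b := Real.log_nonneg hb1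
  show a * Real.log a ≤ b * Real.log b
  nlinarith
lemma conv_apply (n : ℕ) (hn : 0 < n) (k : ℤ) :
    convZ (unif (Finset.Ico (0:ℤ) n)) (unif (Finset.Ico (0:ℤ) n)) k
      = ((Finset.Ico (max 0 (k - (n:ℤ) + 1)) (min (n:ℤ) (k+1))).card : ℝ) / (n:ℝ)^2 := by
  have hcard : (Finset.Ico (0:ℤ) (n:ℤ)).card = n := by rw [Int.card_Ico]; simp
  have hterm : ∀ i : ℤ, unif (Finset.Ico (0:ℤ) n) i * unif (Finset.Ico (0:ℤ) n) (k - i)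
      = if i ∈ Finset.Ico (max 0 (k - (n:ℤ) + 1)) (min (n:ℤ) (k+1)) then ((n:ℝ)^2)⁻¹ else 0 := by
    intro i
    have hiff : i ∈ Finset.Ico (max 0 (k - (n:ℤ) + 1)) (min (n:ℤ) (k+1)) ↔
        (i ∈ Finset.Ico (0:ℤ) (n:ℤ) ∧ (k - i) ∈ Finset.Ico (0:ℤ) (n:ℤ)) := by
      simp only [Finset.mem_Ico]
      omega
    unfold unif
    rw [hcard]
    by_cases h1 : i ∈ Finset.Ico (0:ℤ) (n:ℤ)
    · by_cases h2 : (k - i) ∈ Finset.Ico (0:ℤ) (n:ℤ)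
      · rw [if_pos h1, if_pos h2, if_pos (hiff.2 ⟨h1, h2⟩), sq, mul_inv]
      · rw [if_pos h1, if_neg h2, if_neg (fun h => h2 (hiff.1 h).2), mul_zero]
    · rw [if_neg h1, if_neg (fun h => h1 (hiff.1 h).1), zero_mul]
  unfold convZ
  rw [tsum_congr hterm,
    tsum_eq_sum (s := Finset.Ico (max 0 (k - (n:ℤ) + 1)) (min (n:ℤ) (k+1)))
      (by intro b hb; simp [hb]),
    Finset.sum_congr rfl (fun i hi => if_pos hi), Finset.sum_const, nsmul_eq_mul,
    div_eq_mul_inv]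


lemma ent_eq_fin (n : ℕ) (hn : 0 < n) :
    entZ (convZ (unif (Finset.Ico (0:ℤ) n)) (unif (Finset.Ico (0:ℤ) n)))
      = ∑ k ∈ Finset.Icc (0:ℤ) (2*(n:ℤ) - 2),
          Real.negMulLog ((((min (k+1) (2*(n:ℤ)-1-k)).toNat : ℝ)) / (n:ℝ)^2) := by
  have hn' : (1:ℤ) ≤ (n:ℤ) := by exact_mod_cast hn
  unfold entZ
  rw [tsum_congr (fun k => by rw [conv_apply n hn k])]
  rw [tsum_eq_sum (s := Finset.Icc (0:ℤ) (2*(n:ℤ) - 2)) ?_]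
  · apply Finset.sum_congr rfl
    intro k hk
    simp only [Finset.mem_Icc] at hk
    rw [Int.card_Ico]
    congr 3
    omega
  · intro k hk
    simp only [Finset.mem_Icc, not_and, not_le] at hk
    have : Finset.Ico (max 0 (k - (n:ℤ) + 1)) (min (n:ℤ) (k+1)) = ∅ := by
      apply Finset.Ico_eq_empty
      rw [not_lt]
      omega
    rw [this]
    simp [Real.negMulLog_zero]

lemma sum_split (n : ℕ) (hn : 0 < n) :
    ∑ k ∈ Finset.Icc (0:ℤ) (2*(n:ℤ)-2),
        Real.negMulLog ((((min (k+1) (2*(n:ℤ)-1-k)).toNat : ℝ)) / (n:ℝ)^2)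
      = 2 * ∑ i ∈ Finset.Icc 1 (n-1), Real.negMulLog ((i:ℝ)/(n:ℝ)^2)
        + Real.negMulLog ((n:ℝ)/(n:ℝ)^2) := by
  obtain ⟨m, rfl⟩ : ∃ m, n = m + 1 := ⟨n - 1, by omega⟩
  set N : ℤ := ((m+1 : ℕ) : ℤ) with hN
  have hN1 : (1:ℤ) ≤ N := by simp [hN]
  have hsplit : Finset.Icc (0:ℤ) (2*N-2) = Finset.Icc 0 (N-1) ∪ Finset.Icc N (2*N-2) := by
    ext x; simp only [Finset.mem_union, Finset.mem_Icc]; omega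
  have hdisj : Disjoint (Finset.Icc (0:ℤ) (N-1)) (Finset.Icc N (2*N-2)) := by
    rw [Finset.disjoint_left]; intro a ha hb
    simp only [Finset.mem_Icc] at ha hb; omega
  rw [hsplit, Finset.sum_union hdisj]
  have hS1 : ∑ k ∈ Finset.Icc (0:ℤ) (N-1),
      Real.negMulLog ((((min (k+1) (2*N-1-k)).toNat : ℝ)) / ((m+1:ℕ):ℝ)^2)
      = ∑ i ∈ Finset.Icc 1 (m+1), Real.negMulLog ((i:ℝ)/((m+1:ℕ):ℝ)^2) := by
    apply Finset.sum_nbij'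
      (f := fun k => Real.negMulLog ((((min (k+1) (2*N-1-k)).toNat : ℝ)) / ((m+1:ℕ):ℝ)^2))
      (g := fun i : ℕ => Real.negMulLog ((i:ℝ)/((m+1:ℕ):ℝ)^2))
      (i := fun k => (k+1).toNat) (j := fun i => (i:ℤ) - 1)
    · intro a ha; simp only [Finset.mem_Icc] at ha ⊢; omega
    · intro a ha; simp only [Finset.mem_Icc] at ha ⊢; omega
    · intro a ha; simp only [Finset.mem_Icc] at ha; omega
    · intro a ha; simp only [Finset.mem_Icc] at ha; omega
    · intro a ha
      simp only [Finset.mem_Icc] at ha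
      congr 2
      have h1 : min (a+1) (2*N-1-a) = a + 1 := by omega
      rw [h1]
  have hS2 : ∑ k ∈ Finset.Icc N (2*N-2),
      Real.negMulLog ((((min (k+1) (2*N-1-k)).toNat : ℝ)) / ((m+1:ℕ):ℝ)^2)
      = ∑ i ∈ Finset.Icc 1 m, Real.negMulLog ((i:ℝ)/((m+1:ℕ):ℝ)^2) := by
    apply Finset.sum_nbij'
      (f := fun k => Real.negMulLog ((((min (k+1) (2*N-1-k)).toNat : ℝ)) / ((m+1:ℕ):ℝ)^2))
      (g := fun i : ℕ => Real.negMulLog ((i:ℝ)/((m+1:ℕ):ℝ)^2))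
      (i := fun k => (2*N-1-k).toNat) (j := fun i => 2*N-1-(i:ℤ))
    · intro a ha; simp only [Finset.mem_Icc] at ha ⊢; omega
    · intro a ha; simp only [Finset.mem_Icc] at ha ⊢; omega
    · intro a ha; simp only [Finset.mem_Icc] at ha; omega
    · intro a ha; simp only [Finset.mem_Icc] at ha; omega
    · intro a ha
      simp only [Finset.mem_Icc] at ha
      congr 2
      have h1 : min (a+1) (2*N-1-a) = 2*N-1-a := by omega
      rw [h1]
  rw [hS1, hS2]
  have htop : ∑ i ∈ Finset.Icc 1 (m+1), Real.negMulLog ((i:ℝ)/((m+1:ℕ):ℝ)^2)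
      = ∑ i ∈ Finset.Icc 1 m, Real.negMulLog ((i:ℝ)/((m+1:ℕ):ℝ)^2)
        + Real.negMulLog (((m+1:ℕ):ℝ)/((m+1:ℕ):ℝ)^2) := by
    rw [Finset.sum_Icc_succ_top (by omega)]
  rw [htop]
  simp only [Nat.add_sub_cancel]
  ring

lemma ent_formula (n : ℕ) (hpos : 0 < n) :
    entZ (convZ (unif (Finset.Ico (0 : ℤ) n)) (unif (Finset.Ico (0 : ℤ) n))) =
        -2 * ∑ i ∈ Finset.Icc 1 (n - 1),
            ((i : ℝ) / (n : ℝ) ^ 2) * Real.log ((i : ℝ) / (n : ℝ) ^ 2) -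
          (1 / (n : ℝ)) * Real.log (1 / (n : ℝ)) := by
  have hn0 : (n:ℝ) ≠ 0 := by positivity
  have h1 : (n:ℝ)/(n:ℝ)^2 = 1/(n:ℝ) := by field_simp
  rw [ent_eq_fin n hpos, sum_split n hpos, h1]
  simp only [Real.negMulLog, neg_mul]
  rw [Finset.sum_neg_distrib]
  ring

lemma gauss_real (n : ℕ) (hpos : 0 < n) :
    ∑ i ∈ Finset.Icc 1 (n-1), (i:ℝ) = (n:ℝ)*((n:ℝ)-1)/2 := by
  have h1 : ∑ i ∈ Finset.Icc 1 (n-1), (i:ℝ) = ∑ i ∈ Finset.range n, (i:ℝ) := by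
    apply Finset.sum_subset
    · intro x hx; simp only [Finset.mem_Icc] at hx; simp only [Finset.mem_range]; omega
    · intro x hx hnx
      simp only [Finset.mem_range] at hx
      simp only [Finset.mem_Icc] at hnx
      have : x = 0 := by omega
      simp [this]
  have h2 := Finset.sum_range_id_mul_two n
  have h3 : ((∑ i ∈ Finset.range n, i : ℕ) : ℝ) = ∑ i ∈ Finset.range n, (i:ℝ) := by
    push_cast; ring
  have h4 : (((∑ i ∈ Finset.range n, i) * 2 : ℕ) : ℝ) = ((n * (n-1) : ℕ) : ℝ) := by
    exact_mod_cast h2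
  rw [Nat.cast_mul, Nat.cast_mul, Nat.cast_sub hpos, h3] at h4
  push_cast at h4 ⊢
  rw [h1]; linarith

lemma ent_lower (n : ℕ) (hpos : 0 < n) :
    -2 * ∑ i ∈ Finset.Icc 1 (n - 1),
            ((i : ℝ) / (n : ℝ) ^ 2) * Real.log ((i : ℝ) / (n : ℝ) ^ 2) -
          (1 / (n : ℝ)) * Real.log (1 / (n : ℝ)) ≥
        Real.log n + 1 / 2 - Real.log n / n - 1 / (2 * (n : ℝ) ^ 2) := by
  have hn1 : (1:ℝ) ≤ (n:ℝ) := by exact_mod_cast hpos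
  have hn0 : (n:ℝ) ≠ 0 := by linarith
  have hn2 : (0:ℝ) < (n:ℝ)^2 := by positivity
  have hSl := sum_ilogi_le n hpos
  have hexp : ∑ i ∈ Finset.Icc 1 (n - 1),
      ((i : ℝ) / (n : ℝ) ^ 2) * Real.log ((i : ℝ) / (n : ℝ) ^ 2)
      = (∑ i ∈ Finset.Icc 1 (n-1), (i:ℝ) * Real.log i) / (n:ℝ)^2
        - (2 * Real.log n / (n:ℝ)^2) * ((n:ℝ)*((n:ℝ)-1)/2) := by
    rw [← gauss_real n hpos, Finset.mul_sum, Finset.sum_div, ← Finset.sum_sub_distrib]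
    apply Finset.sum_congr rfl
    intro i hi
    simp only [Finset.mem_Icc] at hi
    have hi1 : (1:ℝ) ≤ (i:ℝ) := by exact_mod_cast hi.1
    have hi0 : (i:ℝ) ≠ 0 := by linarith
    rw [Real.log_div hi0 (by positivity), Real.log_pow]
    push_cast
    ring
  rw [hexp, one_div, Real.log_inv]
  rw [ge_iff_le, ← sub_nonneg]
  have key : -2 * ((∑ i ∈ Finset.Icc 1 (n-1), (i:ℝ) * Real.log i) / (n:ℝ)^2
        - (2 * Real.log n / (n:ℝ)^2) * ((n:ℝ)*((n:ℝ)-1)/2)) - (n:ℝ)⁻¹ * (-Real.log n)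
      - (Real.log n + 1 / 2 - Real.log n / n - 1 / (2 * (n : ℝ) ^ 2))
      = ((n:ℝ)^2/2 * Real.log n - (n:ℝ)^2/4 + 1/4
          - ∑ i ∈ Finset.Icc 1 (n-1), (i:ℝ) * Real.log i) * (2/(n:ℝ)^2) := by
    field_simp
    ring
  rw [key]
  apply mul_nonneg (by linarith) (by positivity)

/-- The entropy of the triangular distribution (self-convolution of the uniform
distribution on `{0, 1, ..., n-1}`) equals
`-2 ∑_{i=1}^{n-1} (i/n²) log (i/n²) - (1/n) log (1/n)`, and this quantity is at least
`log n + 1/2 - (log n)/n - 1/(2n²)`. -/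
theorem entropy_triangular (n : ℕ) (hpos : 0 < n) :
    entZ (convZ (unif (Finset.Ico (0 : ℤ) n)) (unif (Finset.Ico (0 : ℤ) n))) =
        -2 * ∑ i ∈ Finset.Icc 1 (n - 1),
            ((i : ℝ) / (n : ℝ) ^ 2) * Real.log ((i : ℝ) / (n : ℝ) ^ 2) -
          (1 / (n : ℝ)) * Real.log (1 / (n : ℝ)) ∧
      entZ (convZ (unif (Finset.Ico (0 : ℤ) n)) (unif (Finset.Ico (0 : ℤ) n))) ≥
        Real.log n + 1 / 2 - Real.log n / n - 1 / (2 * (n : ℝ) ^ 2) := by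
  refine ⟨ent_formula n hpos, ?_⟩
  rw [ent_formula n hpos]
  exact ent_lower n hpos
end
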